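/- Let H_0, ..., H_{K-1} be symmetric d×d matrices with h·I ⪯ H_k ⪯ H·I for k = K-M,...,K-1 and ‖H_k‖ ≤ H for k < K-M, where 0 < α ≤ 1/H, 0 < h ≤ H, and M ≤ min{L, K−L}. Then the binomial estimate Ĝ = [I + Σ_{l=1}^{L} Σ_{0≤k_1<...<k_l<K} ∏_{i=1}^{l}(-α H_{k_i})] g satisfies ‖∏_{k=0}^{K-1}(I - α H_k) g − Ĝ‖ ≤ [(αH)^{L+1} Σ_{l=1}^{M} C(K-l, L)(1-αh)^{l-1} + (1-αh)^M Σ_{l=L+1}^{K-M} C(K-M, l)(αH)^l] ‖g‖. -/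

import Mathlib

open Matrix Finset

variable {d : ℕ}

/-- Operator (spectral) norm of a real `d × d` matrix, acting on Euclidean space. -/
noncomputable def matOpNorm (M : Matrix (Fin d) (Fin d) ℝ) : ℝ :=
  ‖Matrix.toEuclideanCLM (𝕜 := ℝ) M‖

/-- Apply a matrix to a vector of Euclidean space. -/
noncomputable def applyM (M : Matrix (Fin d) (Fin d) ℝ) (g : EuclideanSpace ℝ (Fin d)) :
    EuclideanSpace ℝ (Fin d) :=
  Matrix.toEuclideanCLM (𝕜 := ℝ) M g

/-- Ordered product `∏_{k=a}^{a+n-1} (I - α H k)`, factors ordered by increasing `k`. -/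
def mulList (H : ℕ → Matrix (Fin d) (Fin d) ℝ) (α : ℝ) (a n : ℕ) :
    Matrix (Fin d) (Fin d) ℝ :=
  ((List.range' a n).map (fun k => (1 : Matrix (Fin d) (Fin d) ℝ) - α • H k)).prod

/-- Truncated binomial expansion
`I + Σ_{l=1}^{L} Σ_{0 ≤ k₁ < … < k_l < K} ∏_{i=1}^{l} (-α H_{k_i})`,
with each inner product ordered by increasing index. -/
def binomSum (H : ℕ → Matrix (Fin d) (Fin d) ℝ) (α : ℝ) (K L : ℕ) :
    Matrix (Fin d) (Fin d) ℝ :=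
  1 + ∑ l ∈ Finset.Icc 1 L, ∑ s ∈ (Finset.range K).powersetCard l,
      ((s.sort (· ≤ ·)).map (fun k => -(α • H k))).prod

/-
Write `X k = -α Hₖ`. The product `∏ₖ (1 + X k)` expands into the ordered elementary symmetric
sums `Tₗ(n) = ∑_{k₁ < ⋯ < kₗ < n} X k₁ ⋯ X kₗ`, and `Ĝ` keeps those of degree `≤ L`. Since
`‖Tₗ(n)‖ ≤ C(n, l) (αH)ˡ`, the error after the first `K - M` factors is at most the dropped
binomial terms. Each further factor obeys `Eₙ₊₁ = Eₙ (1 + X n) + T_L(n) X n`, and on the last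
`M` steps `h ≤ Hₖ ≤ H` makes `‖I - α Hₖ‖ ≤ 1 - αh`, so unrolling this recursion contracts the
initial error by `(1 - αh)ᴹ` and adds the first sum.
-/

open scoped Matrix.Norms.L2Operator

namespace ContinuousLinearMap

variable {E : Type*} [NormedAddCommGroup E] [InnerProductSpace ℝ E]

theorem norm_le_of_abs_inner_le {T : E →L[ℝ] E} (hT : T.IsSymmetric) {c : ℝ} (hc : 0 ≤ c)
    (h : ∀ x, |inner ℝ (T x) x| ≤ c * ‖x‖ ^ 2) : ‖T‖ ≤ c := by
  rw [T.norm_eq_iSup_rayleighQuotient hT]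
  refine ciSup_le fun x => ?_
  rcases eq_or_ne x 0 with rfl | hx
  · simpa using hc
  · rw [rayleighQuotient, reApplyInnerSelf_apply, RCLike.re_to_real, abs_div, abs_sq,
      div_le_iff₀ (by positivity)]
    exact h x

theorem norm_le_of_smul_one_le_of_le_smul_one {T : E →L[ℝ] E} {a b c : ℝ} (hc : 0 ≤ c)
    (hac : -c ≤ a) (hbc : b ≤ c) (ha : a • 1 ≤ T) (hb : T ≤ b • 1) : ‖T‖ ≤ c := by
  rw [le_def] at ha hb
  have hsymm : T.IsSymmetric := fun x y => by
    simpa [inner_sub_left, inner_sub_right, inner_smul_left, inner_smul_right, real_inner_comm]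
      using ha.isSymmetric x y
  have hlo x : a * ‖x‖ ^ 2 ≤ inner ℝ (T x) x := by
    simpa [inner_sub_left, inner_smul_left] using ha.inner_nonneg_left x
  have hhi x : inner ℝ (T x) x ≤ b * ‖x‖ ^ 2 := by
    simpa [inner_sub_left, inner_smul_left] using hb.inner_nonneg_left x
  refine norm_le_of_abs_inner_le hsymm hc fun x => abs_le.2 ⟨?_, ?_⟩
  · nlinarith [hlo x, sq_nonneg ‖x‖]
  · nlinarith [hhi x, sq_nonneg ‖x‖]

end ContinuousLinearMap

namespace Matrix

variable {n : Type*} [Fintype n] [DecidableEq n]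

open scoped ComplexOrder in
theorem isPositive_toEuclideanCLM_iff {𝕜 : Type*} [RCLike 𝕜] {A : Matrix n n 𝕜} :
    (toEuclideanCLM (𝕜 := 𝕜) A).IsPositive ↔ A.PosSemidef := by
  rw [← ContinuousLinearMap.isPositive_toLinearMap_iff, coe_toEuclideanCLM_eq_toEuclideanLin,
    isPositive_toEuclideanLin_iff]

theorem smul_one_le_toEuclideanCLM_iff {A : Matrix n n ℝ} {a : ℝ} :
    a • 1 ≤ toEuclideanCLM (𝕜 := ℝ) A ↔ (A - a • 1).PosSemidef := by
  rw [ContinuousLinearMap.le_def, ← isPositive_toEuclideanCLM_iff, map_sub, map_smul, map_one]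

theorem toEuclideanCLM_le_smul_one_iff {A : Matrix n n ℝ} {b : ℝ} :
    toEuclideanCLM (𝕜 := ℝ) A ≤ b • 1 ↔ (b • 1 - A).PosSemidef := by
  rw [ContinuousLinearMap.le_def, ← isPositive_toEuclideanCLM_iff, map_sub, map_smul, map_one]

theorem l2_opNorm_one_le : ‖(1 : Matrix n n ℝ)‖ ≤ 1 := by
  rw [cstar_norm_def, map_one]
  exact ContinuousLinearMap.norm_id_le

theorem l2_opNorm_le_of_posSemidef {A : Matrix n n ℝ} {a b c : ℝ} (hc : 0 ≤ c)
    (hac : -c ≤ a) (hbc : b ≤ c) (ha : (A - a • 1).PosSemidef)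
    (hb : (b • 1 - A).PosSemidef) : ‖A‖ ≤ c :=
  ContinuousLinearMap.norm_le_of_smul_one_le_of_le_smul_one hc hac hbc
    (smul_one_le_toEuclideanCLM_iff.2 ha) (toEuclideanCLM_le_smul_one_iff.2 hb)

theorem l2_opNorm_one_sub_smul_le {A : Matrix n n ℝ} {α h H : ℝ} (hα : 0 ≤ α)
    (hαH : α * H ≤ 1) (hhH : h ≤ H) (hlo : (A - h • 1).PosSemidef)
    (hhi : (H • 1 - A).PosSemidef) : ‖1 - α • A‖ ≤ 1 - α * h := by
  have hαh : α * h ≤ α * H := mul_le_mul_of_nonneg_left hhH hα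
  refine l2_opNorm_le_of_posSemidef (a := 1 - α * H) (by linarith) (by linarith) le_rfl ?_ ?_
  · convert hhi.smul hα using 1
    module
  · convert hlo.smul hα using 1
    module

end Matrix

theorem Finset.sort_insert_of_forall_lt {α : Type*} [LinearOrder α] {s : Finset α} {a : α}
    (hs : ∀ b ∈ s, b < a) : (insert a s).sort (· ≤ ·) = s.sort (· ≤ ·) ++ [a] := by
  have hl : (s.sort (· ≤ ·) ++ [a]).toFinset = insert a s := by
    ext b; simp
  rw [← hl, List.toFinset_sort]
  · exact List.pairwise_append.2 ⟨s.pairwise_sort _, List.pairwise_singleton _ _,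
      fun b hb c hc => (List.mem_singleton.1 hc) ▸ (hs b ((mem_sort _).1 hb)).le⟩
  · exact List.nodup_append.2 ⟨s.sort_nodup _, List.nodup_singleton _,
      fun b hb c hc => (List.mem_singleton.1 hc) ▸ (hs b ((mem_sort _).1 hb)).ne⟩

section Expansion

variable {R : Type*} [Ring R] (X : ℕ → R)

def orderedEsymm (l n : ℕ) : R :=
  ∑ s ∈ (range n).powersetCard l, ((s.sort (· ≤ ·)).map X).prod

@[simp]
theorem orderedEsymm_zero_left (n : ℕ) : orderedEsymm X 0 n = 1 := by
  simp [orderedEsymm]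

theorem orderedEsymm_of_lt {l n : ℕ} (h : n < l) : orderedEsymm X l n = 0 := by
  rw [orderedEsymm, powersetCard_eq_empty.2 (by simpa using h), sum_empty]

theorem orderedEsymm_succ_succ (l n : ℕ) :
    orderedEsymm X (l + 1) (n + 1) = orderedEsymm X (l + 1) n + orderedEsymm X l n * X n := by
  have hn : n ∉ range n := by simp
  rw [orderedEsymm, range_add_one, powersetCard_succ_insert hn, sum_union, sum_image,
    orderedEsymm, orderedEsymm, sum_mul]
  · refine congrArg _ (sum_congr rfl fun s hs => ?_)
    have hs' : ∀ k ∈ s, k < n := fun k hk => mem_range.1 ((mem_powersetCard.1 hs).1 hk)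
    rw [sort_insert_of_forall_lt hs', List.map_append, List.prod_append]
    simp
  · intro s hs t ht hst
    have hns : n ∉ s := fun h => by simpa using (mem_powersetCard.1 hs).1 h
    have hnt : n ∉ t := fun h => by simpa using (mem_powersetCard.1 ht).1 h
    simpa [erase_insert hns, erase_insert hnt] using congrArg (erase · n) hst
  · refine disjoint_right.2 fun s hs hs' => ?_
    obtain ⟨t, -, rfl⟩ := mem_image.1 hs
    simpa using (mem_powersetCard.1 hs').1 (mem_insert_self n t)

theorem sum_orderedEsymm_succ (L n : ℕ) :
    ∑ l ∈ range (L + 1), orderedEsymm X l (n + 1)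
      = (∑ l ∈ range (L + 1), orderedEsymm X l n) * (1 + X n) - orderedEsymm X L n * X n := by
  induction L with
  | zero => simp
  | succ L ih =>
    rw [sum_range_succ, ih, orderedEsymm_succ_succ, sum_range_succ _ (L + 1)]
    noncomm_ring

theorem prod_one_add_eq_sum_orderedEsymm (n : ℕ) :
    ((List.range n).map (1 + X ·)).prod = ∑ l ∈ range (n + 1), orderedEsymm X l n := by
  induction n with
  | zero => simp
  | succ n ih =>
    rw [List.prod_range_succ, ih, sum_orderedEsymm_succ, sum_range_succ _ (n + 1),
      orderedEsymm_of_lt X n.lt_succ_self]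
    simp

def truncError (L n : ℕ) : R :=
  ((List.range n).map (1 + X ·)).prod - ∑ l ∈ range (L + 1), orderedEsymm X l n

theorem truncError_eq_sum {L n : ℕ} (hL : L ≤ n) :
    truncError X L n = ∑ l ∈ Icc (L + 1) n, orderedEsymm X l n := by
  rw [truncError, prod_one_add_eq_sum_orderedEsymm,
    ← sum_range_add_sum_Ico _ (by omega : L + 1 ≤ n + 1), add_sub_cancel_left,
    Ico_add_one_right_eq_Icc]

theorem truncError_succ (L n : ℕ) :
    truncError X L (n + 1) = truncError X L n * (1 + X n) + orderedEsymm X L n * X n := by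
  rw [truncError, truncError, List.prod_range_succ, sum_orderedEsymm_succ]
  noncomm_ring

end Expansion

section Norms

variable {R : Type*} [NormedRing R] (h1 : ‖(1 : R)‖ ≤ 1) {X : ℕ → R} {a : ℝ}
include h1

theorem norm_list_prod_le_pow {l : List R} (hl : ∀ x ∈ l, ‖x‖ ≤ a) :
    ‖l.prod‖ ≤ a ^ l.length := by
  induction l with
  | nil => simpa using h1
  | cons x l ih =>
    have hx := hl x List.mem_cons_self
    rw [List.prod_cons, List.length_cons, pow_succ']
    exact (norm_mul_le _ _).trans (mul_le_mul hx (ih fun y hy => hl y (List.mem_cons_of_mem x hy))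
      (norm_nonneg _) ((norm_nonneg x).trans hx))

theorem norm_orderedEsymm_le {n : ℕ} (hX : ∀ k < n, ‖X k‖ ≤ a) (l : ℕ) :
    ‖orderedEsymm X l n‖ ≤ n.choose l * a ^ l :=
  calc ‖orderedEsymm X l n‖ ≤ ∑ s ∈ (range n).powersetCard l, a ^ l := by
        refine (norm_sum_le _ _).trans (sum_le_sum fun s hs => ?_)
        obtain ⟨hsn, rfl⟩ := mem_powersetCard.1 hs
        simpa using norm_list_prod_le_pow h1 (l := (s.sort (· ≤ ·)).map X)
          (by simpa using fun k hk => hX k (mem_range.1 (hsn hk)))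
    _ = n.choose l * a ^ l := by rw [sum_const, card_powersetCard, card_range, nsmul_eq_mul]

theorem norm_truncError_le {L n : ℕ} (hL : L ≤ n) (hX : ∀ k < n, ‖X k‖ ≤ a) :
    ‖truncError X L n‖ ≤ ∑ l ∈ Icc (L + 1) n, n.choose l * a ^ l := by
  rw [truncError_eq_sum X hL]
  exact (norm_sum_le _ _).trans (sum_le_sum fun l _ => norm_orderedEsymm_le h1 hX l)

theorem norm_truncError_succ_le {ρ : ℝ} (L n : ℕ) (hX : ∀ k ≤ n, ‖X k‖ ≤ a)
    (hρ : ‖1 + X n‖ ≤ ρ) :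
    ‖truncError X L (n + 1)‖ ≤ ρ * ‖truncError X L n‖ + a ^ (L + 1) * n.choose L := by
  have hT := norm_orderedEsymm_le h1 (fun k hk => hX k hk.le) L
  have ha : 0 ≤ a := (norm_nonneg _).trans (hX 0 (Nat.zero_le n))
  rw [truncError_succ]
  calc _ ≤ ‖truncError X L n‖ * ‖1 + X n‖ + ‖orderedEsymm X L n‖ * ‖X n‖ :=
        (norm_add_le _ _).trans (add_le_add (norm_mul_le _ _) (norm_mul_le _ _))
    _ ≤ ‖truncError X L n‖ * ρ + n.choose L * a ^ L * a := by gcongr; exact hX n le_rfl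
    _ = _ := by ring

end Norms

theorem le_pow_mul_add_sum_of_le_mul_add {e c : ℕ → ℝ} {ρ : ℝ} (hρ : 0 ≤ ρ) (n₀ : ℕ)
    {m : ℕ} (h : ∀ k, n₀ ≤ k → k < n₀ + m → e (k + 1) ≤ ρ * e k + c k) :
    e (n₀ + m) ≤ ρ ^ m * e n₀ + ∑ l ∈ Icc 1 m, c (n₀ + m - l) * ρ ^ (l - 1) := by
  induction m with
  | zero => simp
  | succ m ih =>
    have shift : ∑ l ∈ Icc 1 (m + 1), c (n₀ + (m + 1) - l) * ρ ^ (l - 1)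
        = c (n₀ + m) + ρ * ∑ l ∈ Icc 1 m, c (n₀ + m - l) * ρ ^ (l - 1) := by
      simp only [← Ico_add_one_right_eq_Icc, sum_Ico_eq_sum_range, add_tsub_cancel_right,
        sum_range_succ', mul_sum, add_comm (c _)]
      refine congr_arg₂ _ (sum_congr rfl fun i _ => ?_) (by simp)
      rw [show n₀ + (m + 1) - (1 + (i + 1)) = n₀ + m - (1 + i) by omega,
        show 1 + (i + 1) - 1 = (1 + i - 1) + 1 by omega, pow_succ]
      ring
    calc e (n₀ + (m + 1)) ≤ ρ * e (n₀ + m) + c (n₀ + m) := h (n₀ + m) (by omega) (by omega)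
      _ ≤ ρ * (ρ ^ m * e n₀ + ∑ l ∈ Icc 1 m, c (n₀ + m - l) * ρ ^ (l - 1)) + c (n₀ + m) := by
        gcongr
        exact ih fun k hk hk' => h k hk (by omega)
      _ = _ := by rw [shift]; ring

theorem mulList_zero_eq_prod (H : ℕ → Matrix (Fin d) (Fin d) ℝ) (α : ℝ) (n : ℕ) :
    mulList H α 0 n = ((List.range n).map fun k => 1 + -(α • H k)).prod := by
  simp only [mulList, ← List.range_eq_range', sub_eq_add_neg]

theorem binomSum_eq_sum_orderedEsymm (H : ℕ → Matrix (Fin d) (Fin d) ℝ) (α : ℝ)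
    (K L : ℕ) :
    binomSum H α K L = ∑ l ∈ range (L + 1), orderedEsymm (fun k => -(α • H k)) l K := by
  rw [binomSum, sum_range_succ', orderedEsymm_zero_left, add_comm, ← Ico_add_one_right_eq_Icc,
    sum_Ico_eq_sum_range, add_tsub_cancel_right]
  simp only [orderedEsymm, add_comm 1]

theorem mulList_sub_binomSum (H : ℕ → Matrix (Fin d) (Fin d) ℝ) (α : ℝ) (K L : ℕ) :
    mulList H α 0 K - binomSum H α K L = truncError (fun k => -(α • H k)) L K := by
  rw [mulList_zero_eq_prod, binomSum_eq_sum_orderedEsymm, truncError]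

theorem binommaml_error_bound_strong_convex_general (K L M : ℕ) (Hm : ℕ → Matrix (Fin d) (Fin d) ℝ)
    (α H h : ℝ) (hstrong : ∀ k, K - M ≤ k → k < K →
      (Hm k - h • (1 : Matrix (Fin d) (Fin d) ℝ)).PosSemidef ∧
      (H • (1 : Matrix (Fin d) (Fin d) ℝ) - Hm k).PosSemidef)
    (hbdd : ∀ k, k < K - M → matOpNorm (Hm k) ≤ H)
    (hα : 0 < α) (hαH : α ≤ 1 / H) (hh : 0 < h) (hhH : h ≤ H)
    (hLMK : L + M ≤ K) (g : EuclideanSpace ℝ (Fin d)) :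
    ‖applyM (mulList Hm α 0 K) g - applyM (binomSum Hm α K L) g‖
      ≤ ((α * H) ^ (L + 1) * ∑ l ∈ Finset.Icc 1 M, ((K - l).choose L : ℝ) * (1 - α * h) ^ (l - 1)
          + (1 - α * h) ^ M
              * ∑ l ∈ Finset.Icc (L + 1) (K - M), ((K - M).choose l : ℝ) * (α * H) ^ l)
        * ‖g‖ := by
  have hH : 0 < H := hh.trans_le hhH
  have hαH1 : α * H ≤ 1 := (le_div_iff₀ hH).1 (by simpa using hαH)
  have hρ : 0 ≤ 1 - α * h := by nlinarith
  have hMK : M ≤ K := by omega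
  have hnorm : ∀ k < K, ‖Hm k‖ ≤ H := fun k hk =>
    if hkM : k < K - M then hbdd k hkM else
      (hstrong k (by omega) hk).elim fun hlo hhi =>
        l2_opNorm_le_of_posSemidef hH.le (by linarith) le_rfl hlo hhi
  set X : ℕ → Matrix (Fin d) (Fin d) ℝ := fun k => -(α • Hm k)
  have hX : ∀ k < K, ‖X k‖ ≤ α * H := fun k hk => by
    simpa [X, norm_smul, abs_of_pos hα] using mul_le_mul_of_nonneg_left (hnorm k hk) hα.le
  have hstep : ∀ k, K - M ≤ k → k < K →
      ‖truncError X L (k + 1)‖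
        ≤ (1 - α * h) * ‖truncError X L k‖ + (α * H) ^ (L + 1) * k.choose L :=
    fun k hk hk' => norm_truncError_succ_le l2_opNorm_one_le L k (fun j hj => hX j (by omega)) <| by
      rw [← sub_eq_add_neg]
      exact (hstrong k hk hk').elim (l2_opNorm_one_sub_smul_le hα.le hαH1 hhH)
  have hgron := le_pow_mul_add_sum_of_le_mul_add (e := fun n => ‖truncError X L n‖)
    (c := fun n => (α * H) ^ (L + 1) * n.choose L) hρ (K - M) (m := M)
    fun k hk hk' => hstep k hk (by omega)
  rw [Nat.sub_add_cancel hMK] at hgron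
  have hstart :=
    norm_truncError_le l2_opNorm_one_le (by omega : L ≤ K - M) fun k hk => hX k (by omega)
  rw [applyM, applyM, ← _root_.sub_apply, ← map_sub, mulList_sub_binomSum]
  refine (ContinuousLinearMap.le_opNorm _ g).trans (mul_le_mul_of_nonneg_right ?_ (norm_nonneg g))
  simp_rw [mul_assoc, ← mul_sum] at hgron
  calc ‖truncError X L K‖ ≤ _ := hgron
    _ ≤ _ := by rw [add_comm]; gcongr

/-- BinomMAML error bound under local strong convexity at the final `M` trajectory points:
`‖∏_{k=0}^{K-1}(I-αH_k) g - Ĝ‖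
  ≤ [(αH)^{L+1} Σ_{l=1}^{M} C(K-l,L)(1-αh)^{l-1}
     + (1-αh)^M Σ_{l=L+1}^{K-M} C(K-M,l)(αH)^l] ‖g‖`. -/
theorem binommaml_error_bound_strong_convex (K L M : ℕ) (Hm : ℕ → Matrix (Fin d) (Fin d) ℝ)
    (α H h : ℝ) (hsymm : ∀ k, (Hm k).IsSymm)
    (hstrong : ∀ k, K - M ≤ k → k < K →
      (Hm k - h • (1 : Matrix (Fin d) (Fin d) ℝ)).PosSemidef ∧
      (H • (1 : Matrix (Fin d) (Fin d) ℝ) - Hm k).PosSemidef)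
    (hbdd : ∀ k, k < K - M → matOpNorm (Hm k) ≤ H)
    (hα : 0 < α) (hαH : α ≤ 1 / H) (hh : 0 < h) (hhH : h ≤ H)
    (hML : M ≤ L) (hLMK : L + M ≤ K) (g : EuclideanSpace ℝ (Fin d)) :
    ‖applyM (mulList Hm α 0 K) g - applyM (binomSum Hm α K L) g‖
      ≤ ((α * H) ^ (L + 1) * ∑ l ∈ Finset.Icc 1 M, ((K - l).choose L : ℝ) * (1 - α * h) ^ (l - 1)
          + (1 - α * h) ^ M
              * ∑ l ∈ Finset.Icc (L + 1) (K - M), ((K - M).choose l : ℝ) * (α * H) ^ l)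
        * ‖g‖ :=
  binommaml_error_bound_strong_convex_general K L M Hm α H h hstrong hbdd hα hαH hh hhH hLMK g
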